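/- arXiv:2506.06577 — 3 statements merged into one kernel-verified Lean document; each statement's English description precedes it below -/
import Mathlib

section
/- The codewords |0̄⟩ and |1̄⟩ of the X–I code Ξ(2m) are fixed by every stabilizer generator: for every Z-generator G_Z and every X-generator G_X one has G_Z |0̄⟩ = |0̄⟩, G_Z |1̄⟩ = |1̄⟩, G_X |0̄⟩ = |0̄⟩, and G_X |1̄⟩ = |1̄⟩. -/
open scoped BigOperators

/-- Bit strings on `2m` qubits. -/
abbrev Bits (m : ℕ) := Fin (2*m) → ZMod 2

/-- The `2m`-qubit Hilbert space, as functions from computational basis labels to `ℂ`. -/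
abbrev QState (m : ℕ) := Bits m → ℂ

/-- Indicator bit string of a finite set of qubits. -/
def indSet (m : ℕ) (S : Finset (Fin (2*m))) : Bits m := fun i => if i ∈ S then 1 else 0

/-- The Pauli-X operator on the set `S`: sends `|x⟩` to `|x + 1_S⟩`. -/
def Xop (m : ℕ) (S : Finset (Fin (2*m))) : QState m →ₗ[ℂ] QState m where
  toFun v := fun x => v (x + indSet m S)
  map_add' _ _ := rfl
  map_smul' _ _ := rfl

/-- The Pauli-Z operator on the set `S`: sends `|x⟩` to `(-1)^{∑_{i∈S} x i} |x⟩`. -/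
def Zop (m : ℕ) (S : Finset (Fin (2*m))) : QState m →ₗ[ℂ] QState m where
  toFun v := fun x => ((-1 : ℂ) ^ (∑ i ∈ S, (x i).val)) * v x
  map_add' u v := by funext x; simp [mul_add]
  map_smul' c v := by funext x; simp; ring

/-- The antipodal involution `τ i = i + m (mod 2m)`. -/
def tau (m : ℕ) (i : Fin (2*m)) : Fin (2*m) :=
  ⟨(i.val + m) % (2*m), Nat.mod_lt _ (by have := i.isLt; omega)⟩

/-- The computational basis state `|x⟩`. -/
def ket (m : ℕ) (x : Bits m) : QState m := fun y => if y = x then 1 else 0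

/-- The pair-equal bit string determined by `b : Fin m → ZMod 2`. -/
def xb (m : ℕ) (b : Fin m → ZMod 2) : Bits m :=
  fun i => b ⟨i.val % m, Nat.mod_lt _ (by have := i.isLt; omega)⟩

/-- The logical codeword `|0̄⟩` of the X–I code `Ξ(2m)`. -/
noncomputable def ket0 (m : ℕ) : QState m :=
  ((Real.sqrt (2 ^ (m-1)) : ℂ))⁻¹ •
    ∑ b ∈ Finset.univ.filter (fun b : Fin m → ZMod 2 => ∑ i, b i = 0), ket m (xb m b)

/-- The logical codeword `|1̄⟩` of the X–I code `Ξ(2m)`. -/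
noncomputable def ket1 (m : ℕ) : QState m :=
  ((Real.sqrt (2 ^ (m-1)) : ℂ))⁻¹ •
    ∑ b ∈ Finset.univ.filter (fun b : Fin m → ZMod 2 => ∑ i, b i = 1), ket m (xb m b)

/-!
Each codeword is a uniform superposition of the pair-equal strings `x_b` with `b` ranging over
one parity class. A Z-generator on an antipodal pair sees two equal bits in every `x_b`, so its
phase is `(-1)^(2 x_i) = 1`. An X-generator on two distinct antipodal pairs `r ≠ s` sends `x_b` to
`x_(b + e_r + e_s)`, and `b ↦ b + e_r + e_s` is a parity-preserving bijection, so it only permutes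
the terms of each codeword.
-/

open Finset

lemma Nat.mod_eq_ite_of_lt_two_mul {a n : ℕ} (h : a < 2 * n) :
    a % n = if a < n then a else a - n := by
  split_ifs with han
  · exact Nat.mod_eq_of_lt han
  · rw [Nat.mod_eq_sub_mod (by omega), Nat.mod_eq_of_lt (by omega)]

lemma ZModModule.add_eq_iff_eq_add {G : Type*} [AddCommGroup G] [Module (ZMod 2) G]
    {a b c : G} : a + b = c ↔ a = c + b := by
  rw [← eq_sub_iff_add_eq, ZModModule.sub_eq_add]

lemma sum_single_add_single {ι : Type*} [Fintype ι] [DecidableEq ι] (r s : ι) :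
    ∑ k, (Pi.single r 1 + Pi.single s 1 : ι → ZMod 2) k = 0 := by
  simp only [Pi.add_apply, sum_add_distrib, sum_pi_single', mem_univ, if_true]
  decide

variable {m : ℕ}

def pairIndex (i : Fin (2*m)) : Fin m := ⟨i.val % m, Nat.mod_lt _ (by have := i.isLt; omega)⟩

lemma xb_apply (b : Fin m → ZMod 2) (i : Fin (2*m)) : xb m b i = b (pairIndex i) := rfl

lemma xb_add (b c : Fin m → ZMod 2) : xb m (b + c) = xb m b + xb m c := rfl

lemma tau_val (i : Fin (2*m)) : (tau m i).val = if i.val < m then i.val + m else i.val - m := by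
  have := i.isLt
  change (i.val + m) % (2*m) = _
  rw [Nat.mod_eq_ite_of_lt_two_mul (by omega)]
  split_ifs <;> omega

lemma pairIndex_val (i : Fin (2*m)) :
    (pairIndex i).val = if i.val < m then i.val else i.val - m :=
  Nat.mod_eq_ite_of_lt_two_mul i.isLt

lemma tau_ne_self (i : Fin (2*m)) : tau m i ≠ i := by
  have := i.isLt
  rw [Ne, Fin.ext_iff, tau_val]
  split_ifs <;> omega

lemma mem_pair_iff {i k : Fin (2*m)} :
    k ∈ ({i, tau m i} : Finset (Fin (2*m))) ↔ pairIndex k = pairIndex i := by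
  have := i.isLt
  have := k.isLt
  simp only [mem_insert, mem_singleton, Fin.ext_iff, tau_val, pairIndex_val]
  split_ifs <;> omega

lemma pairIndex_tau (i : Fin (2*m)) : pairIndex (tau m i) = pairIndex i :=
  mem_pair_iff.mp (by simp)

lemma disjoint_pairs_of_ne {i j : Fin (2*m)}
    (hij : ({i, tau m i} : Finset (Fin (2*m))) ≠ {j, tau m j}) :
    Disjoint ({i, tau m i} : Finset (Fin (2*m))) {j, tau m j} := by
  refine disjoint_left.mpr fun k hki hkj => hij (ext fun l => ?_)
  rw [mem_pair_iff, mem_pair_iff, ← mem_pair_iff.mp hki, ← mem_pair_iff.mp hkj]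

lemma indSet_union_of_disjoint {S T : Finset (Fin (2*m))} (hST : Disjoint S T) :
    indSet m (S ∪ T) = indSet m S + indSet m T := by
  funext k
  simp only [indSet, mem_union, Pi.add_apply]
  by_cases hS : k ∈ S
  · simp [hS, disjoint_left.mp hST hS]
  · simp [hS]

lemma indSet_pair (i : Fin (2*m)) :
    indSet m {i, tau m i} = xb m (Pi.single (pairIndex i) 1) := by
  funext k
  simp only [indSet, mem_pair_iff, xb_apply, Pi.single_apply]

lemma Zop_ket (S : Finset (Fin (2*m))) (w : Bits m) :
    Zop m S (ket m w) = (-1 : ℂ) ^ (∑ i ∈ S, (w i).val) • ket m w := by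
  funext x
  simp only [Zop, ket, LinearMap.coe_mk, AddHom.coe_mk, Pi.smul_apply, smul_eq_mul]
  split_ifs with hx
  · rw [hx]
  · simp

lemma Xop_ket (S : Finset (Fin (2*m))) (w : Bits m) :
    Xop m S (ket m w) = ket m (w + indSet m S) := by
  funext x
  simp only [Xop, ket, LinearMap.coe_mk, AddHom.coe_mk, ZModModule.add_eq_iff_eq_add]

lemma Zop_pair_ket_xb (i : Fin (2*m)) (b : Fin m → ZMod 2) :
    Zop m {i, tau m i} (ket m (xb m b)) = ket m (xb m b) := by
  rw [Zop_ket, sum_pair (tau_ne_self i).symm, xb_apply, xb_apply, pairIndex_tau,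
    Even.neg_one_pow ⟨_, rfl⟩, one_smul]

lemma Xop_pairs_ket_xb {i j : Fin (2*m)}
    (hij : ({i, tau m i} : Finset (Fin (2*m))) ≠ {j, tau m j}) (b : Fin m → ZMod 2) :
    Xop m {i, tau m i, j, tau m j} (ket m (xb m b)) =
      ket m (xb m (b + (Pi.single (pairIndex i) 1 + Pi.single (pairIndex j) 1))) := by
  have hunion :
      ({i, tau m i, j, tau m j} : Finset (Fin (2*m))) = {i, tau m i} ∪ {j, tau m j} := by
    ext
    simp only [mem_insert, mem_singleton, mem_union, or_assoc]
  rw [Xop_ket, hunion, indSet_union_of_disjoint (disjoint_pairs_of_ne hij), indSet_pair,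
    indSet_pair, xb_add, xb_add]

variable (m) in
/-- Up to normalization, `ket0 m` is `paritySum m 0` and `ket1 m` is `paritySum m 1`. -/
noncomputable def paritySum (p : ZMod 2) : QState m :=
  ∑ b ∈ univ.filter (fun b : Fin m → ZMod 2 => ∑ i, b i = p), ket m (xb m b)

lemma map_paritySum_of_map_ket_xb (T : QState m →ₗ[ℂ] QState m) (d : Fin m → ZMod 2)
    (hd : ∑ r, d r = 0) (hT : ∀ b, T (ket m (xb m b)) = ket m (xb m (b + d))) (p : ZMod 2) :
    T (paritySum m p) = paritySum m p := by
  rw [paritySum, map_sum]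
  simp_rw [hT]
  exact sum_equiv (Equiv.addRight d) (fun b => by simp [sum_add_distrib, hd]) fun _ _ => rfl

lemma map_codewords_of_map_ket_xb (T : QState m →ₗ[ℂ] QState m) (d : Fin m → ZMod 2)
    (hd : ∑ r, d r = 0) (hT : ∀ b, T (ket m (xb m b)) = ket m (xb m (b + d))) :
    T (ket0 m) = ket0 m ∧ T (ket1 m) = ket1 m := by
  have hsmul (p : ZMod 2) (c : ℂ) : T (c • paritySum m p) = c • paritySum m p := by
    rw [map_smul, map_paritySum_of_map_ket_xb T d hd hT]
  exact ⟨hsmul 0 _, hsmul 1 _⟩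

theorem XI_codewords_stabilized_general (m : ℕ) :
    (∀ i : Fin (2*m),
        Zop m {i, tau m i} (ket0 m) = ket0 m ∧ Zop m {i, tau m i} (ket1 m) = ket1 m) ∧
    (∀ i j : Fin (2*m), ({i, tau m i} : Finset (Fin (2*m))) ≠ {j, tau m j} →
        Xop m {i, tau m i, j, tau m j} (ket0 m) = ket0 m ∧
        Xop m {i, tau m i, j, tau m j} (ket1 m) = ket1 m) := by
  refine ⟨fun i => ?_, fun i j hij => ?_⟩
  · exact map_codewords_of_map_ket_xb _ 0 (by simp) fun b => by
      rw [add_zero, Zop_pair_ket_xb]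
  · exact map_codewords_of_map_ket_xb _ _ (sum_single_add_single _ _) (Xop_pairs_ket_xb hij)

/-- The codewords `|0̄⟩` and `|1̄⟩` of the X–I code `Ξ(2m)` are fixed by every
Z-generator and every X-generator. -/
theorem XI_codewords_stabilized (m : ℕ) (hm : 2 ≤ m) :
    (∀ i : Fin (2*m),
        Zop m {i, tau m i} (ket0 m) = ket0 m ∧ Zop m {i, tau m i} (ket1 m) = ket1 m) ∧
    (∀ i j : Fin (2*m), ({i, tau m i} : Finset (Fin (2*m))) ≠ {j, tau m j} →
        Xop m {i, tau m i, j, tau m j} (ket0 m) = ket0 m ∧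
        Xop m {i, tau m i, j, tau m j} (ket1 m) = ket1 m) :=
  XI_codewords_stabilized_general m
end

section
/- (Full Polytope Symmetry, part 1) Let σ be any permutation of the 2m qubits commuting with the antipodal involution (σ ∘ τ = τ ∘ σ), and let P_σ be the induced permutation operator sending |x⟩ to |x ∘ σ⁻¹⟩. Then conjugation by P_σ maps every Z-generator of the X–I code Ξ(2m) to a Z-generator and every X-generator to an X-generator: P_σ ∘ Zop {i, τ i} ∘ P_σ⁻¹ = Zop {σ i, τ (σ i)}, and P_σ ∘ Xop {i, τ i, j, τ j} ∘ P_σ⁻¹ = Xop {σ i, τ (σ i), σ j, τ (σ j)}. -/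
open scoped BigOperators

/-- The permutation operator `P_σ` induced by a permutation `σ` of the qubits:
it sends `|x⟩` to `|x ∘ σ⁻¹⟩`. -/
def Pperm (m : ℕ) (σ : Equiv.Perm (Fin (2*m))) : QState m →ₗ[ℂ] QState m where
  toFun v := fun y => v (y ∘ σ)
  map_add' _ _ := rfl
  map_smul' _ _ := rfl

/-! Conjugating by `P_σ` relabels qubits: `P_σ X_S P_σ⁻¹ = X_{σ S}` and `P_σ Z_S P_σ⁻¹ = Z_{σ S}`.
Since `σ` commutes with `τ`, it maps the antipodal pair `{i, τ i}` onto `{σ i, τ (σ i)}`. -/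

section Pperm

variable {m : ℕ}

lemma Pperm_mul (σ π : Equiv.Perm (Fin (2*m))) :
    Pperm m (σ * π) = (Pperm m σ).comp (Pperm m π) :=
  rfl

lemma Pperm_one : Pperm m 1 = LinearMap.id :=
  rfl

lemma Pperm_comp_Pperm_inv (σ : Equiv.Perm (Fin (2*m))) :
    (Pperm m σ).comp (Pperm m σ⁻¹) = LinearMap.id := by
  rw [← Pperm_mul, mul_inv_cancel, Pperm_one]

lemma indSet_map_comp (σ : Equiv.Perm (Fin (2*m))) (S : Finset (Fin (2*m))) :
    indSet m (S.map σ.toEmbedding) ∘ σ = indSet m S := by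
  funext k
  simp [indSet]

lemma Pperm_comp_Xop (σ : Equiv.Perm (Fin (2*m))) (S : Finset (Fin (2*m))) :
    (Pperm m σ).comp (Xop m S) = (Xop m (S.map σ.toEmbedding)).comp (Pperm m σ) := by
  ext v y
  simp only [LinearMap.comp_apply, Pperm, Xop, LinearMap.coe_mk, AddHom.coe_mk]
  rw [Pi.add_comp, indSet_map_comp]

lemma Pperm_comp_Zop (σ : Equiv.Perm (Fin (2*m))) (S : Finset (Fin (2*m))) :
    (Pperm m σ).comp (Zop m S) = (Zop m (S.map σ.toEmbedding)).comp (Pperm m σ) := by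
  ext v y
  simp only [LinearMap.comp_apply, Pperm, Zop, LinearMap.coe_mk, AddHom.coe_mk,
    Finset.sum_map, Equiv.coe_toEmbedding, Function.comp_apply]

lemma Pperm_conj_of_comp_eq {σ : Equiv.Perm (Fin (2*m))} {A B : QState m →ₗ[ℂ] QState m}
    (h : (Pperm m σ).comp A = B.comp (Pperm m σ)) :
    (Pperm m σ).comp (A.comp (Pperm m σ⁻¹)) = B := by
  rw [← LinearMap.comp_assoc, h, LinearMap.comp_assoc, Pperm_comp_Pperm_inv, LinearMap.comp_id]

lemma map_antipodalPair {σ : Equiv.Perm (Fin (2*m))} (hσ : ∀ i, σ (tau m i) = tau m (σ i))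
    (i : Fin (2*m)) : ({i, tau m i} : Finset (Fin (2*m))).map σ.toEmbedding = {σ i, tau m (σ i)} := by
  simp [hσ]

end Pperm

theorem XI_polytope_symmetry_generators_general (m : ℕ)
    (σ : Equiv.Perm (Fin (2*m))) (hσ : ∀ i, σ (tau m i) = tau m (σ i)) :
    (Pperm m σ).comp (Pperm m σ⁻¹) = LinearMap.id ∧
    (∀ i : Fin (2*m),
        (Pperm m σ).comp ((Zop m {i, tau m i}).comp (Pperm m σ⁻¹)) =
          Zop m {σ i, tau m (σ i)}) ∧
    (∀ i j : Fin (2*m), ({i, tau m i} : Finset (Fin (2*m))) ≠ {j, tau m j} →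
        (Pperm m σ).comp ((Xop m {i, tau m i, j, tau m j}).comp (Pperm m σ⁻¹)) =
          Xop m {σ i, tau m (σ i), σ j, tau m (σ j)}) := by
  refine ⟨Pperm_comp_Pperm_inv σ, fun i => ?_, fun i j _ => ?_⟩
  · rw [← map_antipodalPair hσ]
    exact Pperm_conj_of_comp_eq (Pperm_comp_Zop σ _)
  · have hmap : ({i, tau m i, j, tau m j} : Finset (Fin (2*m))).map σ.toEmbedding =
        {σ i, tau m (σ i), σ j, tau m (σ j)} := by
      simp [hσ]
    rw [← hmap]
    exact Pperm_conj_of_comp_eq (Pperm_comp_Xop σ _)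

/-- (Full Polytope Symmetry, part 1) For any permutation `σ` of the qubits commuting
with the antipodal involution `τ`, conjugation by `P_σ` (with `P_σ⁻¹ = P_{σ⁻¹}`) maps
every Z-generator of `Ξ(2m)` to a Z-generator and every X-generator to an
X-generator. -/
theorem XI_polytope_symmetry_generators (m : ℕ) (hm : 2 ≤ m)
    (σ : Equiv.Perm (Fin (2*m))) (hσ : ∀ i, σ (tau m i) = tau m (σ i)) :
    (Pperm m σ).comp (Pperm m σ⁻¹) = LinearMap.id ∧
    (∀ i : Fin (2*m),
        (Pperm m σ).comp ((Zop m {i, tau m i}).comp (Pperm m σ⁻¹)) =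
          Zop m {σ i, tau m (σ i)}) ∧
    (∀ i j : Fin (2*m), ({i, tau m i} : Finset (Fin (2*m))) ≠ {j, tau m j} →
        (Pperm m σ).comp ((Xop m {i, tau m i, j, tau m j}).comp (Pperm m σ⁻¹)) =
          Xop m {σ i, tau m (σ i), σ j, tau m (σ j)}) :=
  XI_polytope_symmetry_generators_general m σ hσ
end

section
/- The stabilizer group of the X–I code Ξ(2m) — the subgroup of invertible linear maps on the 2m-qubit Hilbert space generated by all Z-generators Zop {i, τ i} and all X-generators Xop {i, τ i, j, τ j} — is an elementary abelian 2-group of order 2^{2m−1}. -/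
open scoped BigOperators

/-- All stabilizer generators (Z- and X-) of the X–I code `Ξ(2m)`, as units of the
endomorphism ring of the `2m`-qubit Hilbert space. -/
def XIgenUnits (m : ℕ) : Set (Module.End ℂ (QState m))ˣ :=
  {u | (∃ i : Fin (2*m), (u : Module.End ℂ (QState m)) = Zop m {i, tau m i}) ∨
       (∃ i j : Fin (2*m), ({i, tau m i} : Finset (Fin (2*m))) ≠ {j, tau m j} ∧
          (u : Module.End ℂ (QState m)) = Xop m {i, tau m i, j, tau m j})}

/-- The stabilizer group of the X–I code `Ξ(2m)`: the subgroup of invertible linear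
maps generated by all Z-generators and X-generators. -/
noncomputable def XIstabilizer (m : ℕ) : Subgroup (Module.End ℂ (QState m))ˣ :=
  Subgroup.closure (XIgenUnits m)

/-!
Every generator is a Pauli operator `Z^b X^a` whose strings `a, b` are constant on antipodal
pairs, i.e. lifts `xb m t`, `xb m u` of strings `t, u : Fin m → ZMod 2`. Two such operators
commute and square to one, since the symplectic product `xb m u ⬝ᵥ xb m t'` of lifts counts
every term twice. Hence `(t, u) ↦ Z^{xb m u} X^{xb m t}` is an injective homomorphism from the
elementary abelian group `(Fin m → ZMod 2) × (Fin m → ZMod 2)`, and the stabilizer is the image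
of its index-two subgroup `∑ t = 0`: the Z-generators give every `u`, and the X-generators, with
`t = e_k + e_l`, span the even-weight `t`.
-/

namespace XICode

open Matrix

def sign (a : ZMod 2) : ℂ := (-1) ^ a.val

@[simp] lemma sign_zero : sign 0 = 1 := rfl

lemma sign_natCast (n : ℕ) : sign n = (-1) ^ n := by
  rw [sign, ZMod.val_natCast, ← neg_one_pow_eq_pow_mod_two]

lemma sign_add (a b : ZMod 2) : sign (a + b) = sign a * sign b := by
  rw [← ZMod.natCast_zmod_val a, ← ZMod.natCast_zmod_val b, ← Nat.cast_add, sign_natCast,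
    sign_natCast, sign_natCast, pow_add]

lemma sign_eq_one_iff (a : ZMod 2) : sign a = 1 ↔ a = 0 := by
  have sign_one : sign 1 = -1 := by simpa using sign_natCast 1
  obtain rfl | rfl : a = 0 ∨ a = 1 := by revert a; decide
  · simp
  · norm_num [sign_one]

lemma sign_sum {α : Type*} (s : Finset α) (f : α → ZMod 2) :
    sign (∑ i ∈ s, f i) = (-1) ^ (∑ i ∈ s, (f i).val) := by
  rw [← sign_natCast, Nat.cast_sum]
  simp only [ZMod.natCast_val, ZMod.cast_id', id]

section Pauli

variable {ι : Type*} [Fintype ι]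

/-- The Pauli operator `Z^b X^a`. -/
def pauli (a b : ι → ZMod 2) : Module.End ℂ ((ι → ZMod 2) → ℂ) where
  toFun v x := sign (b ⬝ᵥ x) * v (x + a)
  map_add' u v := by funext x; simp [mul_add]
  map_smul' c v := by funext x; simp [mul_left_comm]

lemma pauli_apply (a b : ι → ZMod 2) (v : (ι → ZMod 2) → ℂ) (x : ι → ZMod 2) :
    pauli a b v x = sign (b ⬝ᵥ x) * v (x + a) := rfl

lemma pauli_mul_pauli {a b a' b' : ι → ZMod 2} (h : b' ⬝ᵥ a = 0) :
    pauli a b * pauli a' b' = pauli (a + a') (b + b') := by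
  refine LinearMap.ext fun v => funext fun x => ?_
  simp only [Module.End.mul_apply, pauli_apply, dotProduct_add, add_dotProduct, sign_add, h,
    sign_zero, add_assoc]
  ring

@[simp] lemma pauli_zero_zero : pauli (0 : ι → ZMod 2) 0 = 1 := by
  refine LinearMap.ext fun v => funext fun x => ?_
  simp [pauli_apply]

lemma eq_zero_of_pauli_eq_one [DecidableEq ι] {a b : ι → ZMod 2} (h : pauli a b = 1) :
    a = 0 ∧ b = 0 := by
  have ha : a = 0 := by
    have := congr_fun (LinearMap.congr_fun h (Pi.single a 1)) 0
    simpa [pauli_apply, Pi.single_apply, eq_comm (a := a)] using this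
  subst ha
  refine ⟨rfl, funext fun i => ?_⟩
  have := congr_fun (LinearMap.congr_fun h 1) (Pi.single i 1)
  simpa [pauli_apply, sign_eq_one_iff] using this

end Pauli

lemma sum_comp_modNat {M : Type*} [AddCommMonoid M] {k n : ℕ} (f : Fin n → M) :
    ∑ i : Fin (k * n), f i.modNat = k • ∑ j, f j := by
  refine (finProdFinEquiv.symm.sum_comp fun p => f p.2).trans ?_
  simp [Fintype.sum_prod_type]

variable {m : ℕ}

lemma xb_dotProduct_xb (t u : Fin m → ZMod 2) : xb m t ⬝ᵥ xb m u = 0 := by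
  change ∑ i : Fin (2 * m), t i.modNat * u i.modNat = 0
  rw [sum_comp_modNat (fun j => t j * u j), two_nsmul, CharTwo.add_self_eq_zero]

lemma xb_injective : Function.Injective (xb m) := by
  intro t u h
  funext j
  simpa [xb, Nat.mod_eq_of_lt j.isLt] using congr_fun h ⟨j, by omega⟩

lemma mem_pair_iff (i k : Fin (2 * m)) :
    k ∈ ({i, tau m i} : Finset _) ↔ k.modNat = i.modNat := by
  have hi := i.isLt
  have hk := k.isLt
  have mod_of_lt (n : ℕ) (hn : n < 2 * m) : n % m = if n < m then n else n - m := by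
    split_ifs with h
    · exact Nat.mod_eq_of_lt h
    · rw [Nat.mod_eq_sub_mod (by omega), Nat.mod_eq_of_lt (by omega)]
  have tau_val : (i.val + m) % (2 * m) = if i.val < m then i.val + m else i.val - m := by
    split_ifs with h
    · exact Nat.mod_eq_of_lt (by omega)
    · rw [Nat.mod_eq_sub_mod (by omega), Nat.mod_eq_of_lt (by omega)]
      omega
  simp only [Finset.mem_insert, Finset.mem_singleton, Fin.ext_iff, tau, Fin.modNat]
  rw [tau_val, mod_of_lt _ hk, mod_of_lt _ hi]
  split_ifs <;> omega

lemma indSet_pair (i : Fin (2 * m)) :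
    indSet m {i, tau m i} = xb m (Pi.single i.modNat (1 : ZMod 2)) := by
  funext k
  change ite _ _ _ = (Pi.single i.modNat 1 : Fin m → ZMod 2) k.modNat
  simp only [mem_pair_iff, Pi.single_apply]

lemma pair_eq_pair_iff {i j : Fin (2 * m)} :
    ({i, tau m i} : Finset _) = {j, tau m j} ↔ i.modNat = j.modNat := by
  refine ⟨fun h => ?_, fun h => Finset.ext fun k => by rw [mem_pair_iff, mem_pair_iff, h]⟩
  have hj : j ∈ ({i, tau m i} : Finset _) := h ▸ Finset.mem_insert_self j _
  exact ((mem_pair_iff i j).mp hj).symm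

lemma exists_modNat_eq (k : Fin m) : ∃ i : Fin (2 * m), i.modNat = k :=
  ⟨⟨k, by omega⟩, Fin.ext (Nat.mod_eq_of_lt k.isLt)⟩

lemma indSet_union_of_disjoint {S T : Finset (Fin (2 * m))} (h : Disjoint S T) :
    indSet m (S ∪ T) = indSet m S + indSet m T := by
  funext k
  by_cases hS : k ∈ S
  · simp [indSet, hS, Finset.disjoint_left.mp h hS]
  · simp [indSet, hS]

lemma indSet_quad {i j : Fin (2 * m)} (h : i.modNat ≠ j.modNat) :
    indSet m {i, tau m i, j, tau m j} =
      xb m (Pi.single i.modNat 1 + Pi.single j.modNat (1 : ZMod 2)) := by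
  have hdisj : Disjoint ({i, tau m i} : Finset _) {j, tau m j} := by
    rw [Finset.disjoint_left]
    intro k hki hkj
    rw [mem_pair_iff] at hki hkj
    exact h (hki.symm.trans hkj)
  have hunion : ({i, tau m i, j, tau m j} : Finset _) = {i, tau m i} ∪ {j, tau m j} := by
    ext
    simp only [Finset.mem_insert, Finset.mem_union, Finset.mem_singleton, or_assoc]
  rw [hunion, indSet_union_of_disjoint hdisj, indSet_pair, indSet_pair]
  rfl

section Labels

variable {ι : Type*} [Fintype ι]

lemma mem_of_single_mem [DecidableEq ι] {H : AddSubgroup (ι → ZMod 2)}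
    (h : ∀ k, Pi.single k 1 ∈ H) (t : ι → ZMod 2) : t ∈ H := by
  rw [← Finset.univ_sum_single t]
  refine sum_mem fun k _ => ?_
  obtain h0 | h1 : t k = 0 ∨ t k = 1 := by generalize t k = c; revert c; decide
  · simp [h0]
  · exact h1 ▸ h k

lemma mem_of_single_add_single_mem [DecidableEq ι] {H : AddSubgroup (ι → ZMod 2)}
    (h : ∀ k l, k ≠ l → Pi.single k 1 + Pi.single l 1 ∈ H) {t : ι → ZMod 2}
    (ht : ∑ k, t k = 0) : t ∈ H := by
  rcases isEmpty_or_nonempty ι with _ | ⟨⟨k₀⟩⟩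
  · simp [Subsingleton.elim t 0]
  have hdecomp : t = ∑ k, (Pi.single k (t k) + Pi.single k₀ (t k)) := by
    rw [Finset.sum_add_distrib, Finset.univ_sum_single]
    funext i
    by_cases hi : i = k₀ <;> simp [Finset.sum_apply, hi, ht]
  rw [hdecomp]
  refine sum_mem fun k _ => ?_
  obtain h0 | h1 : t k = 0 ∨ t k = 1 := by generalize t k = c; revert c; decide
  · simp [h0]
  · rw [h1]
    by_cases hk : k = k₀
    · rw [hk, ← Pi.single_add, CharTwo.add_self_eq_zero, Pi.single_zero]
      exact zero_mem H
    · exact h k k₀ hk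

variable (ι) in
def xWeight : (ι → ZMod 2) × (ι → ZMod 2) →+ ZMod 2 :=
  AddMonoidHom.mk' (fun p => ∑ k, p.1 k) fun _ _ => Finset.sum_add_distrib

variable (ι) in
def stabLabels : AddSubgroup ((ι → ZMod 2) × (ι → ZMod 2)) := (xWeight ι).ker

lemma mem_stabLabels (p : (ι → ZMod 2) × (ι → ZMod 2)) :
    p ∈ stabLabels ι ↔ ∑ k, p.1 k = 0 :=
  Iff.rfl

lemma stabLabels_le [DecidableEq ι] {K : AddSubgroup ((ι → ZMod 2) × (ι → ZMod 2))}
    (hZ : ∀ k, (0, Pi.single k 1) ∈ K)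
    (hX : ∀ k l, k ≠ l → (Pi.single k 1 + Pi.single l 1, 0) ∈ K) : stabLabels ι ≤ K := by
  intro p hp
  have hx : p.1 ∈ K.comap (AddMonoidHom.inl _ _) := mem_of_single_add_single_mem hX hp
  have hz : p.2 ∈ K.comap (AddMonoidHom.inr _ _) := mem_of_single_mem hZ p.2
  simpa using add_mem (AddSubgroup.mem_comap.mp hx) (AddSubgroup.mem_comap.mp hz)

lemma card_stabLabels [Nonempty ι] :
    Nat.card (stabLabels ι) = 2 ^ (2 * Fintype.card ι - 1) := by
  classical
  obtain ⟨k₀⟩ := ‹Nonempty ι›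
  have hsurj : Function.Surjective (xWeight ι) := fun c =>
    ⟨(Pi.single k₀ c, 0), by simp [xWeight]⟩
  have hcard := (stabLabels ι).card_mul_index
  rw [stabLabels, AddSubgroup.index_ker, AddMonoidHom.range_eq_top.mpr hsurj,
    AddSubgroup.card_top, Nat.card_zmod, Nat.card_prod, Nat.card_fun, Nat.card_zmod,
    Nat.card_eq_fintype_card (α := ι), ← pow_add] at hcard
  have hn : 0 < Fintype.card ι := Fintype.card_pos
  rw [show Fintype.card ι + Fintype.card ι = (2 * Fintype.card ι - 1) + 1 by omega,
    pow_succ] at hcard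
  exact Nat.eq_of_mul_eq_mul_right two_pos hcard

end Labels

lemma Zop_eq_pauli (S : Finset (Fin (2 * m))) : Zop m S = pauli 0 (indSet m S) := by
  refine LinearMap.ext fun v => funext fun x => ?_
  have hdot : indSet m S ⬝ᵥ x = ∑ i ∈ S, x i := by
    simp [dotProduct, indSet, ite_mul, Finset.sum_ite_mem]
  rw [pauli_apply, hdot, sign_sum, add_zero]
  rfl

lemma Xop_eq_pauli (S : Finset (Fin (2 * m))) : Xop m S = pauli (indSet m S) 0 := by
  refine LinearMap.ext fun v => funext fun x => ?_
  simp [pauli_apply, Xop]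

lemma pauli_xb_mul_pauli_xb (t u t' u' : Fin m → ZMod 2) :
    pauli (xb m t) (xb m u) * pauli (xb m t') (xb m u') = pauli (xb m (t + t')) (xb m (u + u')) :=
  pauli_mul_pauli (xb_dotProduct_xb u' t)

lemma pauli_xb_mul_self (t u : Fin m → ZMod 2) :
    pauli (xb m t) (xb m u) * pauli (xb m t) (xb m u) = 1 := by
  have hadd (s : Fin m → ZMod 2) : s + s = 0 := funext fun _ => CharTwo.add_self_eq_zero _
  rw [pauli_xb_mul_pauli_xb, hadd, hadd]
  exact pauli_zero_zero

variable (m) in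
def labelPauli :
    Multiplicative ((Fin m → ZMod 2) × (Fin m → ZMod 2)) →* (Module.End ℂ (QState m))ˣ :=
  MonoidHom.mk'
    (fun p => ⟨pauli (xb m p.toAdd.1) (xb m p.toAdd.2), pauli (xb m p.toAdd.1) (xb m p.toAdd.2),
      pauli_xb_mul_self _ _, pauli_xb_mul_self _ _⟩)
    fun _ _ => Units.ext (pauli_xb_mul_pauli_xb _ _ _ _).symm

lemma coe_labelPauli (p : Multiplicative ((Fin m → ZMod 2) × (Fin m → ZMod 2))) :
    (labelPauli m p : Module.End ℂ (QState m)) = pauli (xb m p.toAdd.1) (xb m p.toAdd.2) := rfl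

lemma labelPauli_mul_self (p : Multiplicative ((Fin m → ZMod 2) × (Fin m → ZMod 2))) :
    labelPauli m p * labelPauli m p = 1 :=
  Units.ext (pauli_xb_mul_self _ _)

lemma labelPauli_injective : Function.Injective (labelPauli m) := by
  rw [injective_iff_map_eq_one]
  intro p hp
  obtain ⟨ht, hu⟩ := eq_zero_of_pauli_eq_one (congrArg Units.val hp)
  exact congrArg Multiplicative.ofAdd (Prod.ext (xb_injective ht) (xb_injective hu))

lemma labelPauli_single_right (i : Fin (2 * m)) :
    (labelPauli m (.ofAdd (0, Pi.single i.modNat 1)) : Module.End ℂ (QState m)) =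
      Zop m {i, tau m i} := by
  rw [coe_labelPauli, Zop_eq_pauli, indSet_pair]
  rfl

lemma labelPauli_single_add_single_left {i j : Fin (2 * m)} (h : i.modNat ≠ j.modNat) :
    (labelPauli m (.ofAdd (Pi.single i.modNat 1 + Pi.single j.modNat 1, 0)) :
      Module.End ℂ (QState m)) = Xop m {i, tau m i, j, tau m j} := by
  rw [coe_labelPauli, Xop_eq_pauli, indSet_quad h]
  rfl

lemma XIstabilizer_eq_map (m : ℕ) :
    XIstabilizer m = (stabLabels (Fin m)).toSubgroup.map (labelPauli m) := by
  apply le_antisymm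
  · rw [XIstabilizer, Subgroup.closure_le]
    rintro u (⟨i, hu⟩ | ⟨i, j, hij, hu⟩)
    · refine ⟨.ofAdd (0, Pi.single i.modNat 1), (mem_stabLabels (0, _)).mpr (by simp),
        Units.ext ?_⟩
      rw [labelPauli_single_right, hu]
    · have hmod : i.modNat ≠ j.modNat := fun h => hij (pair_eq_pair_iff.mpr h)
      refine ⟨.ofAdd (Pi.single i.modNat 1 + Pi.single j.modNat 1, 0),
        (mem_stabLabels (_, 0)).mpr ?_, Units.ext ?_⟩
      · simp [Finset.sum_add_distrib, CharTwo.add_self_eq_zero]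
      · rw [labelPauli_single_add_single_left hmod, hu]
  · rw [Subgroup.map_le_iff_le_comap]
    intro p hp
    refine (Subgroup.mem_toAddSubgroup' _ p.toAdd).mp (stabLabels_le ?_ ?_ hp)
    · intro k
      obtain ⟨i, rfl⟩ := exists_modNat_eq k
      exact Subgroup.subset_closure (Or.inl ⟨i, labelPauli_single_right i⟩)
    · intro k l hkl
      obtain ⟨i, rfl⟩ := exists_modNat_eq k
      obtain ⟨j, rfl⟩ := exists_modNat_eq l
      exact Subgroup.subset_closure (Or.inr ⟨i, j, pair_eq_pair_iff.not.mpr hkl,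
        labelPauli_single_add_single_left hkl⟩)

end XICode

/-- The stabilizer group of `Ξ(2m)` is an elementary abelian 2-group of order
`2^{2m−1}`. -/
theorem XI_stabilizer_group_structure (m : ℕ) (hm : 2 ≤ m) :
    Nat.card (XIstabilizer m) = 2 ^ (2*m - 1) ∧
    (∀ g ∈ XIstabilizer m, g * g = 1) ∧
    (∀ g ∈ XIstabilizer m, ∀ h ∈ XIstabilizer m, g * h = h * g) := by
  have : Nonempty (Fin m) := ⟨⟨0, by omega⟩⟩
  rw [XICode.XIstabilizer_eq_map]
  refine ⟨?_, ?_, ?_⟩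
  · rw [Subgroup.card_map_of_injective XICode.labelPauli_injective]
    exact (XICode.card_stabLabels).trans (by simp)
  · rintro _ ⟨p, -, rfl⟩
    exact XICode.labelPauli_mul_self p
  · rintro _ ⟨p, -, rfl⟩ _ ⟨q, -, rfl⟩
    rw [← map_mul, mul_comm, map_mul]
end
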